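/- arXiv:2505.06704 — 5 statements merged into one kernel-verified Lean document; each statement's English description precedes it below -/
import Mathlib

section
/- Fix a ∈ ℝ and set b = 0, c = 0. If E = a ≠ 0, then Sol(a, 0, 0, E) is the one-dimensional subspace ℂ·e₁⁰, where e₁⁰ is the sequence with e₁⁰(1) = (1,0,0,0) and e₁⁰(n) = 0 for n ≥ 2. If E = −a ≠ 0, then Sol(a, 0, 0, E) = ℂ·e₄⁰, where e₄⁰(1) = (0,0,0,1) and e₄⁰(n) = 0 for n ≥ 2. If E = a = 0, then Sol(0, 0, 0, 0) is the two-dimensional subspace spanned by e₁⁰ and e₄⁰. -/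
noncomputable section

open scoped ComplexConjugate

/-- The on-site matrix `V` of the local model. -/
def Vmat (a : ℝ) (b c : ℂ) : Matrix (Fin 4) (Fin 4) ℂ :=
  !![(a : ℂ), conj c, 0, conj b;
     c, -(a : ℂ), conj b, 0;
     0, b, (a : ℂ), -c;
     b, 0, -(conj c), -(a : ℂ)]

/-- The hopping matrix `A` of the local model. -/
def Amat : Matrix (Fin 4) (Fin 4) ℂ :=
  !![0, -1, 0, 0;
     0, 0, 0, 0;
     0, 0, 0, 0;
     0, 0, 1, 0]

/-- `ψ : ℕ → (Fin 4 → ℂ)` (with `ψ n` standing for the value at the site `n + 1` of the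
half-line `{1, 2, 3, …}`) solves the half-line eigenvalue equation `(H♯ − E)ψ = 0`:
`(V − E·I)ψ(1) + A*ψ(2) = 0` and `Aψ(n) + (V − E·I)ψ(n+1) + A*ψ(n+2) = 0` for all `n ≥ 1`. -/
def IsSolSeq (a : ℝ) (b c : ℂ) (E : ℝ) (ψ : ℕ → Fin 4 → ℂ) : Prop :=
  (Vmat a b c - (E : ℂ) • 1).mulVec (ψ 0) + (Amat.conjTranspose).mulVec (ψ 1) = 0 ∧
    ∀ n : ℕ,
      Amat.mulVec (ψ n) + (Vmat a b c - (E : ℂ) • 1).mulVec (ψ (n + 1)) +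
        (Amat.conjTranspose).mulVec (ψ (n + 2)) = 0

/-- The `ℓ²` condition: `∑_{n ≥ 1} ‖ψ(n)‖² < ∞`. -/
def IsL2Seq (ψ : ℕ → Fin 4 → ℂ) : Prop :=
  Summable fun n => ∑ i, ‖ψ n i‖ ^ 2

/-- The space `Sol(a, b, c, E)` of `ℓ²`-solutions of the half-line eigenvalue equation. -/
def Sol (a : ℝ) (b c : ℂ) (E : ℝ) : Set (ℕ → Fin 4 → ℂ) :=
  {ψ | IsSolSeq a b c E ψ ∧ IsL2Seq ψ}

/-- The sequence `e₁` with `e₁(n) = (c^{n−1}, 0, 0, 0)` (convention `0⁰ = 1`). -/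
def eSeq₁ (c : ℂ) : ℕ → Fin 4 → ℂ := fun n => ![c ^ n, 0, 0, 0]

/-- The sequence `e₄` with `e₄(n) = (0, 0, 0, c^{n−1})` (convention `0⁰ = 1`). -/
def eSeq₄ (c : ℂ) : ℕ → Fin 4 → ℂ := fun n => ![0, 0, 0, c ^ n]

/-- The sequence `e₁⁰` with `e₁⁰(1) = (1,0,0,0)` and `e₁⁰(n) = 0` for `n ≥ 2`. -/
def e₁₀ : ℕ → Fin 4 → ℂ := fun n => if n = 0 then ![1, 0, 0, 0] else 0

/-- The sequence `e₄⁰` with `e₄⁰(1) = (0,0,0,1)` and `e₄⁰(n) = 0` for `n ≥ 2`. -/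
def e₄₀ : ℕ → Fin 4 → ℂ := fun n => if n = 0 then ![0, 0, 0, 1] else 0

lemma Vmat0_mulVec (a E : ℝ) (v : Fin 4 → ℂ) :
    (Vmat a 0 0 - (E : ℂ) • 1).mulVec v =
      ![((a:ℂ)-E) * v 0, (-(a:ℂ)-E) * v 1, ((a:ℂ)-E) * v 2, (-(a:ℂ)-E) * v 3] := by
  funext i
  fin_cases i <;>
    simp [Vmat, Matrix.mulVec, dotProduct, Fin.sum_univ_four, Matrix.one_apply]

lemma Amat_mulVec (v : Fin 4 → ℂ) : Amat.mulVec v = ![-(v 1), 0, 0, v 2] := by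
  funext i
  fin_cases i <;> simp [Amat, Matrix.mulVec, dotProduct, Fin.sum_univ_four]

lemma AmatT_mulVec (v : Fin 4 → ℂ) : Amat.conjTranspose.mulVec v = ![0, -(v 0), v 3, 0] := by
  funext i
  fin_cases i <;> simp [Amat, Matrix.mulVec, dotProduct, Fin.sum_univ_four,
    Matrix.conjTranspose_apply, Matrix.vecHead, Matrix.vecTail]

lemma sol_iff (a E : ℝ) (ψ : ℕ → Fin 4 → ℂ) :
    IsSolSeq a 0 0 E ψ ↔
      ((((a:ℂ)-E) * ψ 0 0 = 0) ∧
       ((-(a:ℂ)-E) * ψ 0 1 - ψ 1 0 = 0) ∧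
       (((a:ℂ)-E) * ψ 0 2 + ψ 1 3 = 0) ∧
       ((-(a:ℂ)-E) * ψ 0 3 = 0)) ∧
      ∀ n : ℕ,
       ((-(ψ n 1) + ((a:ℂ)-E) * ψ (n+1) 0 = 0) ∧
        ((-(a:ℂ)-E) * ψ (n+1) 1 - ψ (n+2) 0 = 0) ∧
        (((a:ℂ)-E) * ψ (n+1) 2 + ψ (n+2) 3 = 0) ∧
        (ψ n 2 + (-(a:ℂ)-E) * ψ (n+1) 3 = 0)) := by
  unfold IsSolSeq
  simp only [Vmat0_mulVec, Amat_mulVec, AmatT_mulVec, funext_iff]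
  constructor
  · rintro ⟨h1, h2⟩
    refine ⟨⟨?_, ?_, ?_, ?_⟩, fun n => ⟨?_, ?_, ?_, ?_⟩⟩
    · have := h1 0; simpa using this
    · have := h1 1; simp at this; linear_combination this
    · have := h1 2; simpa using this
    · have := h1 3; simpa using this
    · have := h2 n 0; simpa using this
    · have := h2 n 1; simp at this; linear_combination this
    · have := h2 n 2; simp at this; linear_combination this
    · have := h2 n 3; simpa using this
  · rintro ⟨⟨h1, h2, h3, h4⟩, h5⟩
    refine ⟨fun i => ?_, fun n i => ?_⟩
    · fin_cases i
      · simpa using h1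
      · simp; linear_combination h2
      · simpa using h3
      · simpa using h4
    · obtain ⟨g1, g2, g3, g4⟩ := h5 n
      fin_cases i
      · simpa using g1
      · simp; linear_combination g2
      · simp; linear_combination g3
      · simpa using g4

lemma l2_of_fin_supp (ψ : ℕ → Fin 4 → ℂ) (h : ∀ n, n ≠ 0 → ψ n = 0) : IsL2Seq ψ := by
  apply summable_of_ne_finset_zero (s := {0})
  intro n hn
  simp only [Finset.mem_singleton] at hn
  simp [h n hn]

/-- Fix `a ∈ ℝ` and set `b = 0`, `c = 0`. If `E = a ≠ 0`, then `Sol(a,0,0,E) = ℂ·e₁⁰`.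
If `E = −a ≠ 0`, then `Sol(a,0,0,E) = ℂ·e₄⁰`. If `E = a = 0`, then `Sol(0,0,0,0)` is the
two-dimensional subspace spanned by `e₁⁰` and `e₄⁰`. -/
theorem stmt5 (a : ℝ) :
    (a ≠ 0 → Sol a 0 0 a = {ψ | ∃ z : ℂ, ψ = z • e₁₀}) ∧
    (a ≠ 0 → Sol a 0 0 (-a) = {ψ | ∃ z : ℂ, ψ = z • e₄₀}) ∧
    (Sol 0 0 0 0 = {ψ | ∃ z w : ℂ, ψ = z • e₁₀ + w • e₄₀} ∧
      LinearIndependent ℂ ![e₁₀, e₄₀]) := by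
  have ha2 : ∀ a : ℝ, a ≠ 0 → (-(a:ℂ) - a) ≠ 0 := by
    intro a ha h
    apply ha
    have : ((-2 : ℂ) * a) = 0 := by linear_combination h
    simpa [Complex.ext_iff] using this
  refine ⟨?_, ?_, ?_, ?_⟩
  · -- E = a ≠ 0
    intro ha
    ext ψ
    simp only [Sol, Set.mem_setOf_eq]
    constructor
    · rintro ⟨hs, -⟩
      rw [sol_iff] at hs
      obtain ⟨⟨h1, h2, h3, h4⟩, hrec⟩ := hs
      have k1 : ∀ n, ψ n 1 = 0 := by
        intro n; have := (hrec n).1; linear_combination -this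
      have k0 : ∀ n, ψ (n+1) 0 = 0 := by
        intro n
        cases n with
        | zero => linear_combination -h2 + (-(a:ℂ) - a) * (k1 0)
        | succ m =>
          have := (hrec m).2.1
          linear_combination -this + (-(a:ℂ) - a) * k1 (m+1)
      have k3 : ∀ n, ψ n 3 = 0 := by
        intro n
        match n with
        | 0 =>
          rcases mul_eq_zero.mp h4 with h | h
          · exact absurd h (ha2 a ha)
          · exact h
        | 1 => linear_combination h3
        | (m+2) =>
          have := (hrec m).2.2.1
          linear_combination this
      have k2 : ∀ n, ψ n 2 = 0 := by
        intro n
        have := (hrec n).2.2.2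
        linear_combination this - (-(a:ℂ) - a) * k3 (n+1)
      refine ⟨ψ 0 0, ?_⟩
      funext n i
      simp only [Pi.smul_apply, e₁₀, smul_eq_mul]
      cases n with
      | zero =>
        fin_cases i <;> simp [k1 0, k2 0, k3 0]
      | succ m =>
        fin_cases i <;> simp [k0 m, k1 (m+1), k2 (m+1), k3 (m+1)]
    · rintro ⟨z, rfl⟩
      refine ⟨?_, ?_⟩
      · rw [sol_iff]
        refine ⟨⟨?_, ?_, ?_, ?_⟩, ?_⟩
        · simp [e₁₀]
        · simp [e₁₀]
        · simp [e₁₀]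
        · simp [e₁₀]
        · intro n
          refine ⟨?_, ?_, ?_, ?_⟩ <;> cases n <;> simp [e₁₀]
      · apply l2_of_fin_supp
        intro n hn
        simp [e₁₀, hn]
  · -- E = -a ≠ 0
    intro ha
    ext ψ
    simp only [Sol, Set.mem_setOf_eq]
    constructor
    · rintro ⟨hs, -⟩
      rw [sol_iff] at hs
      push_cast at hs
      obtain ⟨⟨h1, h2, h3, h4⟩, hrec⟩ := hs
      have haa : ((a:ℂ) + a) ≠ 0 := by
        intro h
        exact ha2 a ha (by linear_combination -h)
      have k0 : ∀ n, ψ n 0 = 0 := by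
        intro n
        match n with
        | 0 =>
          have : ((a:ℂ) + a) * ψ 0 0 = 0 := by linear_combination h1
          rcases mul_eq_zero.mp this with h | h
          · exact absurd h haa
          · exact h
        | 1 => linear_combination -h2
        | (m+2) =>
          have := (hrec m).2.1
          linear_combination -this
      have k1 : ∀ n, ψ n 1 = 0 := by
        intro n
        have := (hrec n).1
        linear_combination -this + ((a:ℂ) + a) * k0 (n+1)
      have k2 : ∀ n, ψ n 2 = 0 := by
        intro n
        have := (hrec n).2.2.2
        linear_combination this
      have k3 : ∀ n, ψ (n+1) 3 = 0 := by
        intro n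
        cases n with
        | zero => linear_combination h3 - ((a:ℂ) + a) * k2 0
        | succ m =>
          have := (hrec m).2.2.1
          linear_combination this - ((a:ℂ) + a) * k2 (m+1)
      refine ⟨ψ 0 3, ?_⟩
      funext n i
      simp only [Pi.smul_apply, e₄₀, smul_eq_mul]
      cases n with
      | zero =>
        fin_cases i <;> simp [k0 0, k1 0, k2 0]
      | succ m =>
        fin_cases i <;> simp [k0 (m+1), k1 (m+1), k2 (m+1), k3 m]
    · rintro ⟨z, rfl⟩
      refine ⟨?_, ?_⟩
      · rw [sol_iff]
        refine ⟨⟨?_, ?_, ?_, ?_⟩, ?_⟩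
        · simp [e₄₀]
        · simp [e₄₀]
        · simp [e₄₀]
        · simp [e₄₀]
        · intro n
          refine ⟨?_, ?_, ?_, ?_⟩ <;> cases n <;> simp [e₄₀]
      · apply l2_of_fin_supp
        intro n hn
        simp [e₄₀, hn]
  · -- E = a = 0
    ext ψ
    simp only [Sol, Set.mem_setOf_eq]
    constructor
    · rintro ⟨hs, -⟩
      rw [sol_iff] at hs
      push_cast at hs
      obtain ⟨⟨h1, h2, h3, h4⟩, hrec⟩ := hs
      have k1 : ∀ n, ψ n 1 = 0 := by
        intro n; have := (hrec n).1; linear_combination -this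
      have k2 : ∀ n, ψ n 2 = 0 := by
        intro n; have := (hrec n).2.2.2; linear_combination this
      have k0 : ∀ n, ψ (n+1) 0 = 0 := by
        intro n
        cases n with
        | zero => linear_combination -h2
        | succ m => have := (hrec m).2.1; linear_combination -this
      have k3 : ∀ n, ψ (n+1) 3 = 0 := by
        intro n
        cases n with
        | zero => linear_combination h3
        | succ m => have := (hrec m).2.2.1; linear_combination this
      refine ⟨ψ 0 0, ψ 0 3, ?_⟩
      funext n i
      simp only [Pi.add_apply, Pi.smul_apply, e₁₀, e₄₀, smul_eq_mul]
      cases n with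
      | zero =>
        fin_cases i <;> simp [k1 0, k2 0]
      | succ m =>
        fin_cases i <;> simp [k0 m, k1 (m+1), k2 (m+1), k3 m]
    · rintro ⟨z, w, rfl⟩
      refine ⟨?_, ?_⟩
      · rw [sol_iff]
        refine ⟨⟨?_, ?_, ?_, ?_⟩, ?_⟩
        · simp [e₁₀, e₄₀]
        · simp [e₁₀, e₄₀]
        · simp [e₁₀, e₄₀]
        · simp [e₁₀, e₄₀]
        · intro n
          refine ⟨?_, ?_, ?_, ?_⟩ <;> cases n <;> simp [e₁₀, e₄₀]
      · apply l2_of_fin_supp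
        intro n hn
        simp [e₁₀, e₄₀, hn]
  · -- linear independence
    rw [LinearIndependent.pair_iff]
    intro s t h
    constructor
    · have := congrFun (congrFun h 0) 0
      simpa [e₁₀, e₄₀] using this
    · have := congrFun (congrFun h 0) 3
      simpa [e₁₀, e₄₀] using this
end
end

section
/- Fix a ∈ ℝ and b ∈ ℂ with b ≠ 0, and set c = 0. If E² = a² + |b|² + 1, then the ℓ²-solution space Sol(a, b, 0, E) is infinite-dimensional. If instead E² ≠ a² + |b|² and E² ≠ a² + |b|² + 1, then Sol(a, b, 0, E) = {0}. -/
noncomputable section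

open scoped ComplexConjugate

/-!
With `c = 0` the equation at a site expresses the inner components `ψ₂, ψ₃` (Lean indices `1, 2`)
of `ψ(n)` through the outer components `ψ₁, ψ₄` (indices `0, 3`) of `ψ(n+1)`, and the outer
components of `ψ(n+2)` through the inner ones of `ψ(n+1)`. Eliminating the inner components gives
`(E² − a² − |b|² − 1) ψ₁(n) = 0`, and likewise for `ψ₄`, at every site but the first; there the
boundary equation is the site equation with a vanishing left neighbour, and the same elimination
produces the factor `E² − a² − |b|²`. Off both resonances every solution therefore vanishes. On
the second resonance, every pair of neighbouring sites carries a finitely supported solution, and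
these solutions are linearly independent.
-/

open scoped Matrix

lemma not_exists_finset_subset_span_of_linearIndependent {R M ι : Type*} [Ring R]
    [StrongRankCondition R] [AddCommGroup M] [Module R M] [Infinite ι] {v : ι → M}
    (hv : LinearIndependent R v) {S : Set M} (hS : Set.range v ⊆ S) :
    ¬ ∃ s : Finset M, S ⊆ Submodule.span R (s : Set M) := by
  rintro ⟨s, hs⟩
  have := hv.finite_of_le_span_finite v s (hS.trans hs)
  exact not_finite ι

def SiteEq (a : ℝ) (b : ℂ) (E : ℝ) (t u v : Fin 4 → ℂ) : Prop :=
  Amat *ᵥ t + (Vmat a b 0 - (E : ℂ) • 1) *ᵥ u + Amatᴴ *ᵥ v = 0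

lemma isSolSeq_iff_siteEq (a : ℝ) (b : ℂ) (E : ℝ) (ψ : ℕ → Fin 4 → ℂ) :
    IsSolSeq a b 0 E ψ ↔
      SiteEq a b E 0 (ψ 0) (ψ 1) ∧ ∀ n, SiteEq a b E (ψ n) (ψ (n + 1)) (ψ (n + 2)) := by
  simp [IsSolSeq, SiteEq]

lemma siteEq_iff (a : ℝ) (b : ℂ) (E : ℝ) (t u v : Fin 4 → ℂ) :
    SiteEq a b E t u v ↔
      -t 1 + (((a : ℂ) - E) * u 0 + conj b * u 3) = 0 ∧
      (-(a : ℂ) - E) * u 1 + conj b * u 2 - v 0 = 0 ∧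
      b * u 1 + ((a : ℂ) - E) * u 2 + v 3 = 0 ∧
      t 2 + (b * u 0 + (-(a : ℂ) - E) * u 3) = 0 := by
  have hV : (Vmat a b 0 - (E : ℂ) • 1) *ᵥ u = ![((a : ℂ) - E) * u 0 + conj b * u 3,
      (-(a : ℂ) - E) * u 1 + conj b * u 2, b * u 1 + ((a : ℂ) - E) * u 2,
      b * u 0 + (-(a : ℂ) - E) * u 3] := by
    ext i; fin_cases i <;> simp [Vmat, Matrix.mulVec, dotProduct, Fin.sum_univ_four]
  simp only [SiteEq, hV, funext_iff, Fin.forall_fin_succ, IsEmpty.forall_iff, and_true]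
  simp [Amat, Matrix.mulVec, dotProduct, Fin.sum_univ_four, Matrix.conjTranspose_apply,
    sub_eq_add_neg]

namespace SiteEq

variable {a : ℝ} {b : ℂ} {E : ℝ} {t u v w : Fin 4 → ℂ}

lemma outer_eq_zero_of_zero_left (h : SiteEq a b E 0 u v) (hE : E ^ 2 ≠ a ^ 2 + ‖b‖ ^ 2) :
    u 0 = 0 ∧ u 3 = 0 := by
  obtain ⟨h0, -, -, h3⟩ := (siteEq_iff a b E 0 u v).1 h
  simp only [Pi.zero_apply, neg_zero, zero_add] at h0 h3
  have hD : ((E ^ 2 - a ^ 2 - ‖b‖ ^ 2 : ℝ) : ℂ) ≠ 0 := by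
    rwa [Complex.ofReal_ne_zero, sub_sub, sub_ne_zero]
  push_cast at hD
  have hb := Complex.conj_mul' b
  constructor
  · refine mul_left_cancel₀ hD ?_
    linear_combination (-(a : ℂ) - E) * h0 - conj b * h3 + u 0 * hb
  · refine mul_left_cancel₀ hD ?_
    linear_combination -b * h0 + ((a : ℂ) - E) * h3 + u 3 * hb

lemma outer_eq_zero (h₁ : SiteEq a b E t u v) (h₂ : SiteEq a b E u v w)
    (hE : E ^ 2 ≠ a ^ 2 + ‖b‖ ^ 2 + 1) : v 0 = 0 ∧ v 3 = 0 := by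
  obtain ⟨-, h₁1, h₁2, -⟩ := (siteEq_iff a b E t u v).1 h₁
  obtain ⟨h₂0, -, -, h₂3⟩ := (siteEq_iff a b E u v w).1 h₂
  have hD : ((E ^ 2 - a ^ 2 - ‖b‖ ^ 2 - 1 : ℝ) : ℂ) ≠ 0 := by
    rwa [Complex.ofReal_ne_zero, sub_sub, sub_sub, sub_ne_zero, ← add_assoc]
  push_cast at hD
  have hb := Complex.conj_mul' b
  constructor
  · refine mul_left_cancel₀ hD ?_
    linear_combination h₁1 - ((a : ℂ) + E) * h₂0 - conj b * h₂3 + v 0 * hb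
  · refine mul_left_cancel₀ hD ?_
    linear_combination -h₁2 - b * h₂0 + ((a : ℂ) - E) * h₂3 + v 3 * hb

lemma inner_eq_zero (h : SiteEq a b E t u v) (hu : u 0 = 0 ∧ u 3 = 0) : t 1 = 0 ∧ t 2 = 0 := by
  obtain ⟨h0, -, -, h3⟩ := (siteEq_iff a b E t u v).1 h
  obtain ⟨hu0, hu3⟩ := hu
  exact ⟨by linear_combination -h0 + ((a : ℂ) - E) * hu0 + conj b * hu3,
    by linear_combination h3 - b * hu0 + ((a : ℂ) + E) * hu3⟩

end SiteEq

lemma IsSolSeq.eq_zero {a : ℝ} {b : ℂ} {E : ℝ} {ψ : ℕ → Fin 4 → ℂ} (hψ : IsSolSeq a b 0 E ψ)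
    (hE₀ : E ^ 2 ≠ a ^ 2 + ‖b‖ ^ 2) (hE₁ : E ^ 2 ≠ a ^ 2 + ‖b‖ ^ 2 + 1) : ψ = 0 := by
  obtain ⟨h₀, h⟩ := (isSolSeq_iff_siteEq a b E ψ).1 hψ
  have outer : ∀ n, ψ n 0 = 0 ∧ ψ n 3 = 0
    | 0 => h₀.outer_eq_zero_of_zero_left hE₀
    | 1 => h₀.outer_eq_zero (h 0) hE₁
    | m + 2 => (h m).outer_eq_zero (h (m + 1)) hE₁
  funext n i
  obtain ⟨inner₁, inner₂⟩ := (h n).inner_eq_zero (outer (n + 1))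
  fin_cases i
  exacts [(outer n).1, inner₁, inner₂, (outer n).2]

lemma zero_mem_sol (a : ℝ) (b c : ℂ) (E : ℝ) : 0 ∈ Sol a b c E :=
  ⟨by simp [IsSolSeq], by simp [IsL2Seq, summable_zero]⟩

lemma sol_eq_singleton_zero (a : ℝ) (b : ℂ) (E : ℝ) (hE₀ : E ^ 2 ≠ a ^ 2 + ‖b‖ ^ 2)
    (hE₁ : E ^ 2 ≠ a ^ 2 + ‖b‖ ^ 2 + 1) : Sol a b 0 E = {0} :=
  Set.eq_singleton_iff_unique_mem.2 ⟨zero_mem_sol a b 0 E, fun _ hψ => hψ.1.eq_zero hE₀ hE₁⟩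

def compactSol (a : ℝ) (b : ℂ) (E : ℝ) (k : ℕ) : ℕ → Fin 4 → ℂ :=
  fun n => ![if n = k + 1 then 1 else 0, if n = k then (a : ℂ) - E else 0,
    if n = k then -b else 0, 0]

lemma compactSol_mem_sol {a : ℝ} {b : ℂ} {E : ℝ} (hE : E ^ 2 = a ^ 2 + ‖b‖ ^ 2 + 1) (k : ℕ) :
    compactSol a b E k ∈ Sol a b 0 E := by
  have hE' : (E : ℂ) ^ 2 = (a : ℂ) ^ 2 + (‖b‖ : ℂ) ^ 2 + 1 := by exact_mod_cast hE
  have hb := Complex.conj_mul' b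
  refine ⟨(isSolSeq_iff_siteEq a b E _).2 ⟨?_, fun n => ?_⟩, ?summable⟩
  case summable =>
    refine summable_of_ne_finset_zero (s := Finset.range (k + 2)) fun n hn => ?_
    have : n ≠ k + 1 ∧ n ≠ k := by simp at hn; omega
    simp [compactSol, this, Fin.sum_univ_four]
  -- the one nontrivial component is the resonance condition `hE`
  all_goals
    rw [siteEq_iff]
    refine ⟨?_, ?_, ?_, ?_⟩ <;> simp [compactSol] <;> split_ifs <;>
      first | ring1 | omega | linear_combination hE' - hb

lemma linearIndependent_compactSol (a : ℝ) (b : ℂ) (E : ℝ) :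
    LinearIndependent ℂ (compactSol a b E) := by
  let firstComponentShifted : (ℕ → Fin 4 → ℂ) →ₗ[ℂ] ℕ → ℂ :=
    LinearMap.pi fun n => (LinearMap.proj (R := ℂ) (φ := fun _ : Fin 4 => ℂ) 0).comp
      (LinearMap.proj (n + 1))
  refine LinearIndependent.of_comp firstComponentShifted ?_
  convert Pi.linearIndependent_single_one ℕ ℂ with k
  funext n
  simp [firstComponentShifted, compactSol, Pi.single_apply]

theorem stmt8_general (a : ℝ) (b : ℂ) (E : ℝ) :
    (E ^ 2 = a ^ 2 + ‖b‖ ^ 2 + 1 →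
      ¬ ∃ s : Finset (ℕ → Fin 4 → ℂ),
        Sol a b 0 E ⊆ (Submodule.span ℂ (s : Set (ℕ → Fin 4 → ℂ)) :
          Set (ℕ → Fin 4 → ℂ))) ∧
    (E ^ 2 ≠ a ^ 2 + ‖b‖ ^ 2 → E ^ 2 ≠ a ^ 2 + ‖b‖ ^ 2 + 1 → Sol a b 0 E = {0}) :=
  ⟨fun hE => not_exists_finset_subset_span_of_linearIndependent
      (linearIndependent_compactSol a b E) (Set.range_subset_iff.2 (compactSol_mem_sol hE)),
    sol_eq_singleton_zero a b E⟩

/-- Fix `a ∈ ℝ` and `b ∈ ℂ` with `b ≠ 0`, and set `c = 0`. If `E² = a² + |b|² + 1`, then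
the ℓ²-solution space `Sol(a,b,0,E)` is infinite-dimensional (not contained in the span of any
finite set). If instead `E² ≠ a² + |b|²` and `E² ≠ a² + |b|² + 1`, then `Sol(a,b,0,E) = {0}`. -/
theorem stmt8 (a : ℝ) (b : ℂ) (hb : b ≠ 0) (E : ℝ) :
    (E ^ 2 = a ^ 2 + ‖b‖ ^ 2 + 1 →
      ¬ ∃ s : Finset (ℕ → Fin 4 → ℂ),
        Sol a b 0 E ⊆ (Submodule.span ℂ (s : Set (ℕ → Fin 4 → ℂ)) :
          Set (ℕ → Fin 4 → ℂ))) ∧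
    (E ^ 2 ≠ a ^ 2 + ‖b‖ ^ 2 → E ^ 2 ≠ a ^ 2 + ‖b‖ ^ 2 + 1 → Sol a b 0 E = {0}) :=
  stmt8_general a b E
end
end

section
/- Fix a ∈ ℝ and c ∈ ℂ with c ≠ 0, set b = 0, and let E ∈ ℝ with E ≠ a. Then there exists a nonzero ℓ²-solution of the half-line eigenvalue equation if and only if |c| < 1, E = −a and a ≠ 0; and in that case Sol(a, 0, c, −a) is the one-dimensional subspace ℂ·e₄. -/
noncomputable section

open scoped ComplexConjugate

open Filter

lemma Vsub (a E : ℝ) (c : ℂ) : Vmat a 0 c - (E : ℂ) • 1 =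
    !![(a : ℂ) - E, conj c, 0, 0;
       c, -(a : ℂ) - E, 0, 0;
       0, 0, (a : ℂ) - E, -c;
       0, 0, -(conj c), -(a : ℂ) - E] := by
  ext i j
  fin_cases i <;> fin_cases j <;> simp [Vmat, Matrix.one_apply]

lemma Astar : Amat.conjTranspose =
    !![0, 0, 0, 0; -1, 0, 0, 0; 0, 0, 0, 1; 0, 0, 0, 0] := by
  ext i j
  fin_cases i <;> fin_cases j <;>
    simp [Amat, Matrix.conjTranspose_apply, Matrix.vecHead, Matrix.vecTail]

/-- Core lemma: a decaying solution of a second order constant-coefficient recursion whose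
characteristic roots have product of norm 1 is a geometric sequence along one root. -/
lemma core (s p : ℂ) (hp : ‖p‖ = 1) (u : ℕ → ℂ)
    (hrec : ∀ n, u (n + 2) = s * u (n + 1) - p * u n)
    (hlim : Tendsto u atTop (nhds 0)) :
    ∃ l m : ℂ, l + m = s ∧ l * m = p ∧ ∀ n, u (n + 1) = l * u n := by
  obtain ⟨d, hd⟩ := IsAlgClosed.exists_pow_nat_eq (k := ℂ) (s ^ 2 - 4 * p) two_pos
  have hsum : (s + d) / 2 + (s - d) / 2 = s := by ring
  have hprod : (s + d) / 2 * ((s - d) / 2) = p := by linear_combination (-1/4 : ℂ) * hd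
  have h1 : ‖(s + d) / 2‖ * ‖(s - d) / 2‖ = 1 := by rw [← norm_mul, hprod, hp]
  obtain ⟨l, m, hs, hpr, hm⟩ : ∃ l m : ℂ, l + m = s ∧ l * m = p ∧ 1 ≤ ‖m‖ := by
    rcases le_or_gt 1 ‖(s - d) / 2‖ with h | h
    · exact ⟨(s + d) / 2, (s - d) / 2, hsum, hprod, h⟩
    · refine ⟨(s - d) / 2, (s + d) / 2, by rw [add_comm]; exact hsum,
        by rw [mul_comm]; exact hprod, ?_⟩
      by_contra hcon
      push_neg at hcon
      nlinarith [norm_nonneg ((s + d) / 2), norm_nonneg ((s - d) / 2)]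
  set v : ℕ → ℂ := fun n => u (n + 1) - l * u n with hv
  have hvstep : ∀ n, v (n + 1) = m * v n := by
    intro n
    simp only [hv]
    linear_combination hrec n - u (n + 1) * hs + u n * hpr
  have hvgeom : ∀ n, v n = m ^ n * v 0 := by
    intro n
    induction n with
    | zero => simp
    | succ k ih => rw [hvstep k, ih]; ring
  have hvlim : Tendsto v atTop (nhds 0) := by
    have h1 : Tendsto (fun n => u (n + 1)) atTop (nhds 0) :=
      (tendsto_add_atTop_iff_nat 1).mpr hlim
    have h2 : Tendsto (fun n => l * u n) atTop (nhds 0) := by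
      simpa using hlim.const_mul l
    simpa [hv] using h1.sub h2
  have hv0 : v 0 = 0 := by
    by_contra h0
    have hle : ∀ n, ‖v 0‖ ≤ ‖v n‖ := by
      intro n
      rw [hvgeom n, norm_mul, norm_pow]
      have h1n : (1 : ℝ) ≤ ‖m‖ ^ n := one_le_pow₀ hm
      nlinarith [norm_nonneg (v 0)]
    have hnl : Tendsto (fun n => ‖v n‖) atTop (nhds 0) := by simpa using hvlim.norm
    have : ‖v 0‖ ≤ 0 := ge_of_tendsto' hnl hle
    exact h0 (norm_le_zero_iff.mp this)
  refine ⟨l, m, hs, hpr, fun n => ?_⟩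
  have hz : v n = 0 := by rw [hvgeom, hv0, mul_zero]
  have h' : u (n + 1) - l * u n = 0 := hz
  exact sub_eq_zero.mp h'

/-- Wrapper of `core` for the recursion `conj c * u (n+2) = (T+1) u (n+1) - c u n`. -/
lemma keyRec (c : ℂ) (hc : c ≠ 0) (T : ℂ) (u : ℕ → ℂ)
    (hrec : ∀ n, conj c * u (n + 2) = (T + 1) * u (n + 1) - c * u n)
    (hlim : Tendsto u atTop (nhds 0)) :
    ∃ l m : ℂ, l + m = (T + 1) / conj c ∧ l * m = c / conj c ∧
      ∀ n, u (n + 1) = l * u n := by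
  have hcz : conj c ≠ 0 := fun h => hc (by simpa using congrArg (starRingEnd ℂ) h)
  refine core ((T + 1) / conj c) (c / conj c) ?_ u ?_ hlim
  · rw [norm_div, RCLike.norm_conj]
    exact div_self (norm_ne_zero_iff.mpr hc)
  · intro n
    field_simp
    linear_combination hrec n

lemma keyW (c : ℂ) (hc : c ≠ 0) (T : ℂ) (u : ℕ → ℂ)
    (hrec : ∀ n, conj c * u (n + 2) = (T + 1) * u (n + 1) - c * u n)
    (hbd : conj c * u 1 = T * u 0)
    (hlim : Tendsto u atTop (nhds 0)) :
    (∀ n, u n = 0) ∨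
      (u 0 ≠ 0 ∧ T = c * conj c ∧ ‖c‖ < 1 ∧ ∀ n, u n = u 0 * c ^ n) := by
  have hcz : conj c ≠ 0 := fun h => hc (by simpa using congrArg (starRingEnd ℂ) h)
  obtain ⟨l, m, hs, hpr, hstep⟩ := keyRec c hc T u hrec hlim
  have hgeom : ∀ n, u n = u 0 * l ^ n := by
    intro n
    induction n with
    | zero => simp
    | succ k ih => rw [hstep k, ih]; ring
  by_cases h0 : u 0 = 0
  · left
    intro n
    rw [hgeom n, h0, zero_mul]
  · right
    have hTl : conj c * l = T := by
      have hb := hbd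
      rw [hstep 0] at hb
      have h' : (conj c * l - T) * u 0 = 0 := by linear_combination hb
      rcases mul_eq_zero.mp h' with h | h
      · linear_combination h
      · exact absurd h h0
    have hl0 : l ≠ 0 := by
      intro h
      apply div_ne_zero hc hcz
      rw [← hpr, h, zero_mul]
    have hcml : conj c * (l * m) = c := by
      rw [hpr]; field_simp
    have hcsl : conj c * (l + m) = T + 1 := by
      rw [hs]; field_simp
    have h3 : conj c * m = 1 := by linear_combination hcsl - hTl
    have hlc : l = c := by linear_combination hcml - l * h3
    have hT : T = c * conj c := by rw [← hTl, hlc]; ring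
    have hnorm : ‖c‖ < 1 := by
      by_contra hlt
      push_neg at hlt
      have hle : ∀ n, ‖u 0‖ ≤ ‖u n‖ := by
        intro n
        rw [hgeom n, hlc, norm_mul, norm_pow]
        have h1n : (1 : ℝ) ≤ ‖c‖ ^ n := one_le_pow₀ hlt
        nlinarith [norm_nonneg (u 0)]
      have hnl : Tendsto (fun n => ‖u n‖) atTop (nhds 0) := by simpa using hlim.norm
      have : ‖u 0‖ ≤ 0 := ge_of_tendsto' hnl hle
      exact h0 (norm_le_zero_iff.mp this)
    exact ⟨h0, hT, hnorm, fun n => by rw [hgeom n, hlc]⟩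

/-- Shifted second component. -/
def Yseq (ψ : ℕ → Fin 4 → ℂ) : ℕ → ℂ
  | 0 => 0
  | n + 1 => ψ n 1

/-- Structure of ℓ² solutions: every element of `Sol a 0 c E` (with `E ≠ a`) is a multiple
of `eSeq₄ c`, and a nonzero one forces `‖c‖ < 1` and `E = -a`. -/
lemma solStruct (a : ℝ) (c : ℂ) (hc : c ≠ 0) (E : ℝ) (hE : E ≠ a)
    (ψ : ℕ → Fin 4 → ℂ) (hψ : ψ ∈ Sol a 0 c E) :
    ψ = (ψ 0 3) • eSeq₄ c ∧ (ψ 0 3 ≠ 0 → ‖c‖ < 1 ∧ E = -a) := by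
  obtain ⟨⟨hbdv, hrecv⟩, hl2⟩ := hψ
  have hα : ((a : ℂ) - E) ≠ 0 := by
    rw [sub_ne_zero]
    intro h
    exact hE (by exact_mod_cast h.symm)
  -- decay of components
  have htend : ∀ i, Tendsto (fun n => ψ n i) atTop (nhds 0) := by
    intro i
    rw [tendsto_zero_iff_norm_tendsto_zero]
    have hsum0 : Tendsto (fun n => ∑ j, ‖ψ n j‖ ^ 2) atTop (nhds 0) :=
      hl2.tendsto_atTop_zero
    have hsq : Tendsto (fun n => ‖ψ n i‖ ^ 2) atTop (nhds 0) := by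
      refine squeeze_zero (fun n => by positivity) (fun n => ?_) hsum0
      exact Finset.single_le_sum (f := fun j => ‖ψ n j‖ ^ 2)
        (fun j _ => by positivity) (Finset.mem_univ i)
    have hcomp := (Real.continuous_sqrt.tendsto 0).comp hsq
    simpa [Function.comp_def, Real.sqrt_sq_eq_abs, abs_abs, abs_norm] using hcomp
  -- scalar equations
  simp only [Vsub a E c, Astar] at hbdv hrecv
  have hB0 : ((a : ℂ) - E) * ψ 0 0 + conj c * ψ 0 1 = 0 := by
    have h := congrFun hbdv 0
    simp [Matrix.mulVec, dotProduct, Fin.sum_univ_four] at h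
    linear_combination h
  have hB1 : c * ψ 0 0 - ((a : ℂ) + E) * ψ 0 1 - ψ 1 0 = 0 := by
    have h := congrFun hbdv 1
    simp [Matrix.mulVec, dotProduct, Fin.sum_univ_four] at h
    linear_combination h
  have hB2 : ((a : ℂ) - E) * ψ 0 2 - c * ψ 0 3 + ψ 1 3 = 0 := by
    have h := congrFun hbdv 2
    simp [Matrix.mulVec, dotProduct, Fin.sum_univ_four] at h
    linear_combination h
  have hB3 : conj c * ψ 0 2 + ((a : ℂ) + E) * ψ 0 3 = 0 := by
    have h := congrFun hbdv 3
    simp [Matrix.mulVec, dotProduct, Fin.sum_univ_four] at h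
    linear_combination -h
  have hR0 : ∀ n, ψ n 1 = ((a : ℂ) - E) * ψ (n + 1) 0 + conj c * ψ (n + 1) 1 := by
    intro n
    have h := congrFun (hrecv n) 0
    simp [Amat, Matrix.mulVec, dotProduct, Fin.sum_univ_four] at h
    linear_combination -h
  have hR1 : ∀ n, ψ (n + 2) 0 = c * ψ (n + 1) 0 - ((a : ℂ) + E) * ψ (n + 1) 1 := by
    intro n
    have h := congrFun (hrecv n) 1
    simp [Amat, Matrix.mulVec, dotProduct, Fin.sum_univ_four] at h
    linear_combination -h
  have hR2 : ∀ n, ψ (n + 2) 3 = c * ψ (n + 1) 3 - ((a : ℂ) - E) * ψ (n + 1) 2 := by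
    intro n
    have h := congrFun (hrecv n) 2
    simp [Amat, Matrix.mulVec, dotProduct, Fin.sum_univ_four] at h
    linear_combination h
  have hR3 : ∀ n, ψ n 2 = conj c * ψ (n + 1) 2 + ((a : ℂ) + E) * ψ (n + 1) 3 := by
    intro n
    have h := congrFun (hrecv n) 3
    simp [Amat, Matrix.mulVec, dotProduct, Fin.sum_univ_four] at h
    linear_combination h
  set α : ℂ := (a : ℂ) - E with hαdef
  set β : ℂ := (a : ℂ) + E with hβdef
  set T : ℂ := c * conj c + α * β with hTdef
  -- the (2,3)-block
  have hzw : ∀ m, α * ψ m 2 = c * ψ m 3 - ψ (m + 1) 3 := by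
    intro m
    cases m with
    | zero => linear_combination hB2
    | succ n => linear_combination hR2 n
  have hwrec : ∀ n, conj c * ψ (n + 2) 3 = (T + 1) * ψ (n + 1) 3 - c * ψ n 3 := by
    intro n
    linear_combination α * hR3 n - hzw n + conj c * hzw (n + 1)
  have hwbd : conj c * ψ 1 3 = T * ψ 0 3 := by
    linear_combination -α * hB3 + conj c * hzw 0
  have hwalt := keyW c hc T (fun n => ψ n 3) hwrec hwbd (htend 3)
  -- the (0,1)-block
  have hxY : ∀ m, α * ψ m 0 = Yseq ψ m - conj c * Yseq ψ (m + 1) := by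
    intro m
    cases m with
    | zero => simp only [Yseq]; linear_combination hB0
    | succ n => simp only [Yseq]; linear_combination -hR0 n
  have hYrec : ∀ n, conj c * Yseq ψ (n + 2) = (T + 1) * Yseq ψ (n + 1) - c * Yseq ψ n := by
    intro n
    cases n with
    | zero =>
      simp only [Yseq]
      have h0 := hxY 0
      have h1 := hxY 1
      simp only [Yseq] at h0 h1
      linear_combination α * hB1 - c * h0 + h1
    | succ k =>
      simp only [Yseq]
      have h1 := hxY (k + 1)
      have h2 := hxY (k + 2)
      simp only [Yseq] at h1 h2
      linear_combination -α * hR1 k - c * h1 + h2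
  have hYlim : Tendsto (Yseq ψ) atTop (nhds 0) := by
    have h1 : Tendsto (fun n => Yseq ψ (n + 1)) atTop (nhds 0) := htend 1
    exact (tendsto_add_atTop_iff_nat 1).mp h1
  obtain ⟨l, m, -, -, hYstep⟩ := keyRec c hc T (Yseq ψ) hYrec hYlim
  have hYzero : ∀ n, Yseq ψ n = 0 := by
    intro n
    induction n with
    | zero => rfl
    | succ k ih => rw [hYstep k, ih, mul_zero]
  have hy : ∀ n, ψ n 1 = 0 := by
    intro n
    have h := hYzero (n + 1)
    simpa [Yseq] using h
  have hx : ∀ n, ψ n 0 = 0 := by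
    intro n
    have h2 : α * ψ n 0 = 0 := by rw [hxY n, hYzero n, hYzero (n + 1)]; ring
    rcases mul_eq_zero.mp h2 with h | h
    · exact absurd h hα
    · exact h
  have hwfa : ∀ n, ψ n 3 = ψ 0 3 * c ^ n := by
    rcases hwalt with h | ⟨-, -, -, h⟩
    · intro n
      rw [show ψ n 3 = 0 from h n, show ψ 0 3 = 0 from h 0, zero_mul]
    · exact fun n => h n
  have hz : ∀ n, ψ n 2 = 0 := by
    intro n
    have h2 : α * ψ n 2 = 0 := by rw [hzw n, hwfa n, hwfa (n + 1)]; ring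
    rcases mul_eq_zero.mp h2 with h | h
    · exact absurd h hα
    · exact h
  constructor
  · funext n i
    fin_cases i <;> simp [eSeq₄, hx n, hy n, hz n, hwfa n]
  · intro h3
    rcases hwalt with h | ⟨-, hT, hlt, -⟩
    · exact absurd (h 0) h3
    · refine ⟨hlt, ?_⟩
      have hαβ : α * β = 0 := by linear_combination hT - hTdef
      rcases mul_eq_zero.mp hαβ with h | h
      · exact absurd h hα
      · have hcast : (E : ℂ) = -(a : ℂ) := by
          rw [hβdef] at h
          linear_combination h
        exact_mod_cast hcast

/-- Every multiple of `eSeq₄ c` is an ℓ² solution for `E = -a` when `‖c‖ < 1`. -/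
lemma e4mem (a : ℝ) (c : ℂ) (hlt : ‖c‖ < 1) (z : ℂ) :
    z • eSeq₄ c ∈ Sol a 0 c (-a) := by
  refine ⟨⟨?_, ?_⟩, ?_⟩
  · rw [Vsub a (-a) c, Astar]
    funext i
    fin_cases i <;>
      simp [eSeq₄, Matrix.mulVec, dotProduct, Fin.sum_univ_four] <;>
      first
        | tauto
        | (push_cast; ring)
  · intro n
    rw [Vsub a (-a) c, Astar]
    funext i
    fin_cases i <;>
      simp [eSeq₄, Amat, Matrix.mulVec, dotProduct, Fin.sum_univ_four] <;>
      first
        | tauto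
        | (push_cast; ring)
  · have hfun : (fun n => ∑ i, ‖(z • eSeq₄ c) n i‖ ^ 2) =
        fun n => ‖z‖ ^ 2 * (‖c‖ ^ 2) ^ n := by
      funext n
      simp [eSeq₄, Fin.sum_univ_four, norm_mul, norm_pow, mul_pow]
      all_goals
        first
          | tauto
          | (left; ring)
    show Summable fun n => ∑ i, ‖(z • eSeq₄ c) n i‖ ^ 2
    rw [hfun]
    refine Summable.mul_left _ (summable_geometric_of_lt_one (by positivity) ?_)
    nlinarith [norm_nonneg c]

/-- Fix `a ∈ ℝ` and `c ∈ ℂ` with `c ≠ 0`, set `b = 0`, and let `E ∈ ℝ` with `E ≠ a`.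
Then there exists a nonzero ℓ²-solution of the half-line eigenvalue equation iff `|c| < 1`,
`E = −a` and `a ≠ 0`; and in that case `Sol(a,0,c,−a)` is the one-dimensional subspace
`ℂ·e₄`. -/
theorem stmt12 (a : ℝ) (c : ℂ) (hc : c ≠ 0) (E : ℝ) (hE : E ≠ a) :
    ((∃ ψ ∈ Sol a 0 c E, ψ ≠ 0) ↔ (‖c‖ < 1 ∧ E = -a ∧ a ≠ 0)) ∧
    (‖c‖ < 1 → a ≠ 0 → Sol a 0 c (-a) = {ψ | ∃ z : ℂ, ψ = z • eSeq₄ c}) := by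
  constructor
  · constructor
    · rintro ⟨ψ, hψ, hne⟩
      obtain ⟨hrep, himp⟩ := solStruct a c hc E hE ψ hψ
      have h3 : ψ 0 3 ≠ 0 := by
        intro h
        apply hne
        rw [hrep, h, zero_smul]
      obtain ⟨h1, h2⟩ := himp h3
      refine ⟨h1, h2, fun ha => hE ?_⟩
      rw [h2, ha, neg_zero]
    · rintro ⟨h1, h2, -⟩
      subst h2
      refine ⟨eSeq₄ c, ?_, ?_⟩
      · simpa using e4mem a c h1 1
      · intro h
        have h0 := congrFun (congrFun h 0) 3
        simp [eSeq₄] at h0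
  · intro h1 ha
    ext ψ
    constructor
    · intro hψ
      have hE' : -a ≠ a := fun h => ha (by linarith)
      obtain ⟨hrep, -⟩ := solStruct a c hc (-a) hE' ψ hψ
      exact ⟨ψ 0 3, hrep⟩
    · rintro ⟨z, rfl⟩
      exact e4mem a c h1 z
end
end

section
/- Fix a ∈ ℝ and b, c ∈ ℂ with b ≠ 0, c ≠ 0 and |c| < 1, and set E₊ = √(a² + |b|²) and E₋ = −E₊. Then the sum of subspaces Sol(a, b, c, E₊) + Sol(a, b, c, E₋) is a direct sum and equals the two-dimensional span of the sequences e₁ and e₄. -/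
noncomputable section

open scoped ComplexConjugate

open scoped Matrix
open Filter Topology Finset

/-!
Write `ψ(n) = (p, q, r, s)`. The middle rows of the equation propagate the outer components,
`p(n+1) = c p − (a+E) q + b̄ r` and `s(n+1) = c s − b q − (a−E) r`, so when `E² = a² + |b|²` the
combinations `v = (a−E) p + b̄ s` and `u = b p − (a+E) s` get multiplied by `c` at each step. The
outer rows then say `c̄ q(n+1) = q(n) − cⁿ v(1)` (with `q(0) = 0`), which forces `|q(n)| ≥ |v(1)|`
for all `n`; square-summability therefore kills `v` and `u`, then `q` and `r`, and `ψ` is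
`p(1) e₁ + s(1) e₄`. Conversely `p e₁ + s e₄` is a solution at `±E₊` when `(p, s)` is a multiple
of `(a ± E₊, b)`, and these two vectors span `ℂ²` because `E₊ b ≠ 0`. Solutions at two different
energies meet only in `0`, since the two equations differ by `(E' − E) ψ(n)`.
-/

-- `padZero ψ` is `ψ` preceded by a zero site, which turns the boundary equation into the bulk one.
def padZero {M : Type*} [Zero M] (f : ℕ → M) : ℕ → M
  | 0 => 0
  | n + 1 => f n

@[simp] theorem padZero_zero {M : Type*} [Zero M] (f : ℕ → M) : padZero f 0 = 0 := rfl

@[simp] theorem padZero_succ {M : Type*} [Zero M] (f : ℕ → M) (n : ℕ) :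
    padZero f (n + 1) = f n := rfl

@[simp] theorem padZero_zero_fun {M : Type*} [Zero M] : padZero (fun _ => (0 : M)) = 0 := by
  funext n
  cases n <;> rfl

theorem padZero_apply {ι M : Type*} [Zero M] (f : ℕ → ι → M) (n : ℕ) (i : ι) :
    padZero f n i = padZero (fun k => f k i) n := by
  cases n <;> rfl

section Components

variable {a E : ℝ} {b c : ℂ} {ψ : ℕ → Fin 4 → ℂ}

theorem isSolSeq_iff_padZero :
    IsSolSeq a b c E ψ ↔ ∀ n, Amat *ᵥ padZero ψ n + (Vmat a b c - (E : ℂ) • 1) *ᵥ ψ n +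
      Amatᴴ *ᵥ ψ (n + 1) = 0 := by
  refine ⟨fun ⟨h0, h⟩ n => ?_, fun h => ⟨by simpa using h 0, fun n => h (n + 1)⟩⟩
  cases n with
  | zero => simpa using h0
  | succ n => exact h n

theorem Amat_mulVec_add_Vmat_mulVec_add_eq (x y z : Fin 4 → ℂ) :
    Amat *ᵥ x + (Vmat a b c - (E : ℂ) • 1) *ᵥ y + Amatᴴ *ᵥ z =
      ![-x 1 + (a - E) * y 0 + conj c * y 1 + conj b * y 3,
        c * y 0 - (a + E) * y 1 + conj b * y 2 - z 0,
        b * y 1 + (a - E) * y 2 - c * y 3 + z 3,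
        x 2 + b * y 0 - conj c * y 2 - (a + E) * y 3] := by
  ext i
  fin_cases i <;>
    simp [Matrix.sub_mulVec, Matrix.smul_mulVec, Vmat, Amat, Matrix.mulVec, dotProduct,
      Fin.sum_univ_four, Matrix.vecHead, Matrix.vecTail] <;> ring

theorem isSolSeq_iff : IsSolSeq a b c E ψ ↔ ∀ n,
    -padZero (fun k => ψ k 1) n + (a - E) * ψ n 0 + conj c * ψ n 1 + conj b * ψ n 3 = 0 ∧
    c * ψ n 0 - (a + E) * ψ n 1 + conj b * ψ n 2 - ψ (n + 1) 0 = 0 ∧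
    b * ψ n 1 + (a - E) * ψ n 2 - c * ψ n 3 + ψ (n + 1) 3 = 0 ∧
    padZero (fun k => ψ k 2) n + b * ψ n 0 - conj c * ψ n 2 - (a + E) * ψ n 3 = 0 := by
  simp only [isSolSeq_iff_padZero, Amat_mulVec_add_Vmat_mulVec_add_eq, padZero_apply,
    Matrix.cons_eq_zero_iff, Matrix.zero_empty, and_true]

end Components

theorem eq_zero_of_tendsto_of_eq_mul_succ {R : Type*} [NormedRing R] {d : R} (hd : ‖d‖ ≤ 1)
    {x : ℕ → R} (hx : Tendsto x atTop (𝓝 0)) (h : ∀ n, x n = d * x (n + 1)) : x = 0 := by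
  have hmono : Monotone fun n => ‖x n‖ := monotone_nat_of_le_succ fun n =>
    calc ‖x n‖ ≤ ‖d‖ * ‖x (n + 1)‖ := h n ▸ norm_mul_le _ _
      _ ≤ ‖x (n + 1)‖ := mul_le_of_le_one_left (norm_nonneg _) hd
  funext n
  exact norm_le_zero_iff.1 (hmono.ge_of_tendsto (by simpa using hx.norm) n)

theorem eq_zero_of_tendsto_of_conj_mul_eq {c v : ℂ} (hc : ‖c‖ ≤ 1) {x : ℕ → ℂ}
    (hx : Tendsto x atTop (𝓝 0)) (h : ∀ n, conj c * x n = padZero x n - c ^ n * v) : v = 0 := by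
  set t : ℕ → ℝ := fun n => ∑ k ∈ range (n + 1), (‖c‖ ^ 2) ^ k
  have hpow : ∀ n, conj c ^ (n + 1) * x n = -v * t n := by
    intro n
    induction n with
    | zero => simpa [t] using h 0
    | succ n ih =>
      calc conj c ^ (n + 2) * x (n + 1) = conj c ^ (n + 1) * x n - (conj c * c) ^ (n + 1) * v := by
            have hsucc : conj c * x (n + 1) = x n - c ^ (n + 1) * v := h (n + 1)
            linear_combination conj c ^ (n + 1) * hsucc
        _ = -v * t (n + 1) := by
            rw [ih, Complex.conj_mul']; simp only [t, sum_range_succ (n := n + 1)]; push_cast; ring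
  have ht : ∀ n, 1 ≤ t n := fun n =>
    single_le_sum (f := fun k => (‖c‖ ^ 2) ^ k) (fun _ _ => by positivity) (mem_range.2 n.succ_pos)
  have hle : ∀ n, ‖v‖ ≤ ‖x n‖ := fun n =>
    calc ‖v‖ ≤ ‖v‖ * t n := le_mul_of_one_le_right (norm_nonneg _) (ht n)
      _ = ‖c‖ ^ (n + 1) * ‖x n‖ := by
          have := congrArg norm (hpow n)
          rwa [norm_mul, norm_mul, norm_pow, Complex.norm_conj, norm_neg, Complex.norm_real,
            Real.norm_of_nonneg (by linarith [ht n]), eq_comm] at this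
      _ ≤ ‖x n‖ := mul_le_of_le_one_left (norm_nonneg _) (pow_le_one₀ (norm_nonneg _) hc)
  exact norm_le_zero_iff.1 (ge_of_tendsto' (by simpa using hx.norm) hle)

theorem IsL2Seq.tendsto_apply {ψ : ℕ → Fin 4 → ℂ} (hψ : IsL2Seq ψ) (i : Fin 4) :
    Tendsto (fun n => ψ n i) atTop (𝓝 0) := by
  have hsq : Tendsto (fun n => ‖ψ n i‖ ^ 2) atTop (𝓝 0) :=
    squeeze_zero (fun _ => by positivity)
      (fun n => single_le_sum (f := fun j => ‖ψ n j‖ ^ 2) (fun _ _ => by positivity) (mem_univ i))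
      hψ.tendsto_atTop_zero
  rw [tendsto_zero_iff_norm_tendsto_zero]
  simpa using hsq.sqrt

theorem smul_eSeq₁_add_smul_eSeq₄ (c p s : ℂ) :
    p • eSeq₁ c + s • eSeq₄ c = fun n => ![p * c ^ n, 0, 0, s * c ^ n] := by
  funext n i
  fin_cases i <;> simp [eSeq₁, eSeq₄]

section Sol

variable {a E : ℝ} {b c : ℂ}

theorem eq_zero_of_isSolSeq_of_isSolSeq {E' : ℝ} {ψ : ℕ → Fin 4 → ℂ} (hEE' : E ≠ E')
    (h : IsSolSeq a b c E ψ) (h' : IsSolSeq a b c E' ψ) : ψ = 0 := by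
  rw [isSolSeq_iff_padZero] at h h'
  funext n
  have hdiff : ((E' : ℂ) - E) • ψ n = 0 :=
    calc ((E' : ℂ) - E) • ψ n
        = (Amat *ᵥ padZero ψ n + (Vmat a b c - (E : ℂ) • 1) *ᵥ ψ n + Amatᴴ *ᵥ ψ (n + 1)) -
          (Amat *ᵥ padZero ψ n + (Vmat a b c - (E' : ℂ) • 1) *ᵥ ψ n + Amatᴴ *ᵥ ψ (n + 1)) := by
          simp only [Matrix.sub_mulVec, Matrix.smul_mulVec, Matrix.one_mulVec, sub_smul]
          abel
      _ = 0 := by rw [h n, h' n, sub_zero]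
  exact (smul_eq_zero.1 hdiff).resolve_left (sub_ne_zero.2 (by exact_mod_cast hEE'.symm))

theorem zero_mem_Sol : (0 : ℕ → Fin 4 → ℂ) ∈ Sol a b c E :=
  ⟨⟨by simp, fun n => by simp⟩, by simp [IsL2Seq, summable_zero]⟩

theorem smul_eSeq₁_add_smul_eSeq₄_mem_Sol (hc : ‖c‖ < 1) {p s : ℂ}
    (h₁ : (a - E) * p + conj b * s = 0) (h₂ : b * p - (a + E) * s = 0) :
    p • eSeq₁ c + s • eSeq₄ c ∈ Sol a b c E := by
  rw [smul_eSeq₁_add_smul_eSeq₄]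
  refine ⟨isSolSeq_iff.2 fun n => ?_, ?_⟩
  · simp only [Fin.isValue, Matrix.cons_val_one, Matrix.cons_val_zero, padZero_zero_fun,
      Pi.zero_apply, neg_zero, zero_add, mul_zero, add_zero, Matrix.cons_val, sub_zero, zero_sub]
    refine ⟨?_, ?_, ?_, ?_⟩
    · linear_combination c ^ n * h₁
    · ring
    · ring
    · linear_combination c ^ n * h₂
  · have hnorm : (fun n => ∑ i, ‖![p * c ^ n, 0, 0, s * c ^ n] i‖ ^ 2) =
        fun n => (‖p‖ ^ 2 + ‖s‖ ^ 2) * (‖c‖ ^ 2) ^ n := by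
      funext n
      simp only [Fin.sum_univ_four, Fin.isValue, Matrix.cons_val_zero, Complex.norm_mul, norm_pow,
        Matrix.cons_val_one, norm_zero, ne_eq, OfNat.ofNat_ne_zero, not_false_eq_true, zero_pow,
        add_zero, Matrix.cons_val]
      ring
    rw [IsL2Seq, hnorm]
    exact (summable_geometric_of_lt_one (by positivity) (by nlinarith [norm_nonneg c])).mul_left _

theorem eq_smul_eSeq₁_add_smul_eSeq₄_of_mem_Sol (hc : ‖c‖ < 1)
    (hE : (E : ℂ) ^ 2 = a ^ 2 + b * conj b) {ψ : ℕ → Fin 4 → ℂ} (hψ : ψ ∈ Sol a b c E) :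
    ψ = ψ 0 0 • eSeq₁ c + ψ 0 3 • eSeq₄ c := by
  obtain ⟨hsol, hl2⟩ := hψ
  choose row₀ row₁ row₂ row₃ using isSolSeq_iff.1 hsol
  have hv : ∀ n, (a - E) * ψ n 0 + conj b * ψ n 3 =
      c ^ n * ((a - E) * ψ 0 0 + conj b * ψ 0 3) := by
    intro n
    induction n with
    | zero => simp
    | succ n ih =>
      linear_combination -(a - E) * row₁ n + conj b * row₂ n + c * ih + ψ n 1 * hE
  have hu : ∀ n, b * ψ n 0 - (a + E) * ψ n 3 = c ^ n * (b * ψ 0 0 - (a + E) * ψ 0 3) := by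
    intro n
    induction n with
    | zero => simp
    | succ n ih =>
      linear_combination -b * row₁ n - (a + E) * row₂ n + c * ih - ψ n 2 * hE
  have hv₀ : (a - E) * ψ 0 0 + conj b * ψ 0 3 = 0 :=
    eq_zero_of_tendsto_of_conj_mul_eq hc.le (hl2.tendsto_apply 1)
      fun n => by linear_combination row₀ n - hv n
  have hu₀ : -(b * ψ 0 0 - (a + E) * ψ 0 3) = 0 :=
    eq_zero_of_tendsto_of_conj_mul_eq hc.le (hl2.tendsto_apply 2)
      fun n => by linear_combination -row₃ n + hu n
  have hq : ∀ n, ψ n 1 = 0 := congrFun <|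
    eq_zero_of_tendsto_of_eq_mul_succ (by rw [Complex.norm_conj]; exact hc.le)
      (hl2.tendsto_apply 1) fun n => by
        have h : -ψ n 1 + (a - E) * ψ (n + 1) 0 + conj c * ψ (n + 1) 1 + conj b * ψ (n + 1) 3
          = 0 := row₀ (n + 1)
        linear_combination -h + hv (n + 1) + c ^ (n + 1) * hv₀
  have hr : ∀ n, ψ n 2 = 0 := congrFun <|
    eq_zero_of_tendsto_of_eq_mul_succ (by rw [Complex.norm_conj]; exact hc.le)
      (hl2.tendsto_apply 2) fun n => by
        have h : ψ n 2 + b * ψ (n + 1) 0 - conj c * ψ (n + 1) 2 - (a + E) * ψ (n + 1) 3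
          = 0 := row₃ (n + 1)
        linear_combination h - hu (n + 1) + c ^ (n + 1) * hu₀
  have hp : ∀ n, ψ n 0 = c ^ n * ψ 0 0 := by
    intro n
    induction n with
    | zero => simp
    | succ n ih =>
      linear_combination -row₁ n + c * ih - (a + E) * hq n + conj b * hr n
  have hs : ∀ n, ψ n 3 = c ^ n * ψ 0 3 := by
    intro n
    induction n with
    | zero => simp
    | succ n ih =>
      linear_combination row₂ n + c * ih - b * hq n - (a - E) * hr n
  rw [smul_eSeq₁_add_smul_eSeq₄]
  funext n i
  fin_cases i
  · simp [hp n, mul_comm]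
  · exact hq n
  · exact hr n
  · simp [hs n, mul_comm]

end Sol

theorem exists_mem_Sol_add_mem_Sol {a E : ℝ} {b c : ℂ} (hb : b ≠ 0) (hE₀ : E ≠ 0)
    (hc : ‖c‖ < 1) (hE : (E : ℂ) ^ 2 = a ^ 2 + b * conj b) (z w : ℂ) :
    ∃ φ ∈ Sol a b c E, ∃ χ ∈ Sol a b c (-E), z • eSeq₁ c + w • eSeq₄ c = φ + χ := by
  -- `(a + E, b)` and `(a - E, b)` are the admissible coefficient vectors at `E` and `-E`
  set α : ℂ := (z * b - (a - E) * w) / (2 * E * b)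
  set β : ℂ := ((a + E) * w - z * b) / (2 * E * b)
  have hE₀' : (E : ℂ) ≠ 0 := Complex.ofReal_ne_zero.2 hE₀
  have hz : z = α * (a + E) + β * (a - E) := by simp only [α, β]; field_simp; ring
  have hw : w = α * b + β * b := by simp only [α, β]; field_simp; ring
  refine ⟨(α * (a + E)) • eSeq₁ c + (α * b) • eSeq₄ c,
    smul_eSeq₁_add_smul_eSeq₄_mem_Sol hc (by linear_combination -α * hE) (by ring),
    (β * (a - E)) • eSeq₁ c + (β * b) • eSeq₄ c,
    smul_eSeq₁_add_smul_eSeq₄_mem_Sol hc (by push_cast; linear_combination -β * hE)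
      (by push_cast; ring), ?_⟩
  rw [hz, hw]
  module

theorem stmt14_general (a : ℝ) (b c : ℂ) (hb : b ≠ 0) (hc1 : ‖c‖ < 1) :
    Sol a b c (Real.sqrt (a ^ 2 + ‖b‖ ^ 2)) ∩
        Sol a b c (-Real.sqrt (a ^ 2 + ‖b‖ ^ 2)) = {0} ∧
    {ψ | ∃ φ ∈ Sol a b c (Real.sqrt (a ^ 2 + ‖b‖ ^ 2)),
        ∃ χ ∈ Sol a b c (-Real.sqrt (a ^ 2 + ‖b‖ ^ 2)), ψ = φ + χ} =
      {ψ | ∃ z w : ℂ, ψ = z • eSeq₁ c + w • eSeq₄ c} ∧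
    LinearIndependent ℂ ![eSeq₁ c, eSeq₄ c] := by
  set E := Real.sqrt (a ^ 2 + ‖b‖ ^ 2)
  have hE₀ : E ≠ 0 := Real.sqrt_ne_zero'.2 (by have := norm_pos_iff.2 hb; positivity)
  have hE : (E : ℂ) ^ 2 = a ^ 2 + b * conj b := by
    rw [Complex.mul_conj']
    exact_mod_cast Real.sq_sqrt (by positivity)
  have hE' : ((-E : ℝ) : ℂ) ^ 2 = a ^ 2 + b * conj b := by push_cast; rw [neg_sq, hE]
  refine ⟨?_, ?_, ?_⟩
  · ext ψ
    refine ⟨fun ⟨⟨h, _⟩, h', _⟩ => eq_zero_of_isSolSeq_of_isSolSeq ?_ h h', ?_⟩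
    · intro h; exact hE₀ (by linarith)
    · rintro rfl; exact ⟨zero_mem_Sol, zero_mem_Sol⟩
  · ext ψ
    refine ⟨?_, fun ⟨z, w, hψ⟩ => hψ ▸ exists_mem_Sol_add_mem_Sol hb hE₀ hc1 hE z w⟩
    rintro ⟨φ, hφ, χ, hχ, rfl⟩
    rw [eq_smul_eSeq₁_add_smul_eSeq₄_of_mem_Sol hc1 hE hφ,
      eq_smul_eSeq₁_add_smul_eSeq₄_of_mem_Sol hc1 hE' hχ]
    exact ⟨φ 0 0 + χ 0 0, φ 0 3 + χ 0 3, by module⟩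
  · rw [LinearIndependent.pair_iff]
    intro p s h
    rw [smul_eSeq₁_add_smul_eSeq₄] at h
    simpa using congrFun h 0

/-- Fix `a ∈ ℝ` and `b, c ∈ ℂ` with `b ≠ 0`, `c ≠ 0` and `|c| < 1`, and set
`E₊ = √(a² + |b|²)` and `E₋ = −E₊`. Then the sum of subspaces
`Sol(a,b,c,E₊) + Sol(a,b,c,E₋)` is a direct sum and equals the two-dimensional span of the
sequences `e₁` and `e₄`. -/
theorem stmt14 (a : ℝ) (b c : ℂ) (hb : b ≠ 0) (hc : c ≠ 0) (hc1 : ‖c‖ < 1) :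
    Sol a b c (Real.sqrt (a ^ 2 + ‖b‖ ^ 2)) ∩
        Sol a b c (-Real.sqrt (a ^ 2 + ‖b‖ ^ 2)) = {0} ∧
    {ψ | ∃ φ ∈ Sol a b c (Real.sqrt (a ^ 2 + ‖b‖ ^ 2)),
        ∃ χ ∈ Sol a b c (-Real.sqrt (a ^ 2 + ‖b‖ ^ 2)), ψ = φ + χ} =
      {ψ | ∃ z w : ℂ, ψ = z • eSeq₁ c + w • eSeq₄ c} ∧
    LinearIndependent ℂ ![eSeq₁ c, eSeq₄ c] :=
  stmt14_general a b c hb hc1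
end
end

section
/- Fix a ∈ ℝ and b, c ∈ ℂ. For k ∈ ℝ define the 4×4 Hermitian matrix Ĥ(k) = [[a, c̄ − e^{ik}, 0, b̄], [c − e^{−ik}, −a, b̄, 0], [0, b, a, −c + e^{−ik}], [b, 0, −c̄ + e^{ik}, −a]]. Then there exists k ∈ ℝ for which Ĥ(k) is not invertible (equivalently, det Ĥ(k) = 0) if and only if a = 0, b = 0 and |c| = 1. -/
noncomputable section

open scoped ComplexConjugate

/-- The symbol `Ĥ(k)` of the local-model Hamiltonian, a `4×4` Hermitian matrix depending on the
parameters `a ∈ ℝ`, `b, c ∈ ℂ` and on `k ∈ ℝ` (with `e^{ik} = cos k + i sin k`). -/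
def HhatMat (a : ℝ) (b c : ℂ) (k : ℝ) : Matrix (Fin 4) (Fin 4) ℂ :=
  !![(a : ℂ), conj c - Complex.exp (Complex.I * k), 0, conj b;
     c - Complex.exp (-(Complex.I * k)), -(a : ℂ), conj b, 0;
     0, b, (a : ℂ), -c + Complex.exp (-(Complex.I * k));
     b, 0, -(conj c) + Complex.exp (Complex.I * k), -(a : ℂ)]

/-! The determinant of `Ĥ(k)` is the square of `a² + |b|² + |c - e^{-ik}|²`, a sum of squares that
vanishes exactly when `a = 0`, `b = 0` and `c = e^{-ik}`; such a `k` exists iff `|c| = 1`. -/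

open Complex

theorem Matrix.det_fin_four_sq {R : Type*} [CommRing R] (a b b' p q : R) :
    !![a, p, 0, b'; q, -a, b', 0; 0, b, a, -q; b, 0, -p, -a].det = (a ^ 2 + b * b' + p * q) ^ 2 := by
  simp [Matrix.det_succ_row_zero, Fin.sum_univ_succ, Fin.succAbove]
  ring

theorem HhatMat_det (a : ℝ) (b c : ℂ) (k : ℝ) :
    (HhatMat a b c k).det = ((a ^ 2 + ‖b‖ ^ 2 + ‖c - exp (-(I * k))‖ ^ 2 : ℝ) : ℂ) ^ 2 := by
  have hconj : conj c - exp (I * k) = conj (c - exp (-(I * k))) := by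
    rw [map_sub, ← exp_conj, map_neg, map_mul, conj_I, conj_ofReal, neg_mul, neg_neg]
  have hmat : HhatMat a b c k = !![(a : ℂ), conj c - exp (I * k), 0, conj b;
      c - exp (-(I * k)), -a, conj b, 0; 0, b, a, -(c - exp (-(I * k)));
      b, 0, -(conj c - exp (I * k)), -a] := by
    simp only [HhatMat, neg_sub, neg_add_eq_sub]
  rw [hmat, Matrix.det_fin_four_sq, hconj, mul_conj', mul_comm, mul_conj']
  push_cast
  ring

theorem HhatMat_det_eq_zero_iff (a : ℝ) (b c : ℂ) (k : ℝ) :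
    (HhatMat a b c k).det = 0 ↔ a = 0 ∧ b = 0 ∧ c = exp (-(I * k)) := by
  rw [HhatMat_det, pow_eq_zero_iff two_ne_zero, ofReal_eq_zero,
    add_eq_zero_iff_of_nonneg (by positivity) (by positivity),
    add_eq_zero_iff_of_nonneg (by positivity) (by positivity)]
  simp [sub_eq_zero, and_assoc]

theorem exists_exp_neg_I_mul_eq_iff (c : ℂ) : (∃ k : ℝ, c = exp (-(I * k))) ↔ ‖c‖ = 1 := by
  rw [norm_eq_one_iff]
  refine ⟨fun ⟨k, hk⟩ => ⟨-k, ?_⟩, fun ⟨θ, hθ⟩ => ⟨-θ, ?_⟩⟩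
  · rw [hk]; push_cast; ring_nf
  · rw [← hθ]; push_cast; ring_nf

/-- Fix `a ∈ ℝ` and `b, c ∈ ℂ`. Then there exists `k ∈ ℝ` for which `Ĥ(k)` is not invertible
(equivalently, `det Ĥ(k) = 0`) iff `a = 0`, `b = 0` and `|c| = 1`. -/
theorem stmt17 (a : ℝ) (b c : ℂ) :
    (∃ k : ℝ, (HhatMat a b c k).det = 0) ↔ (a = 0 ∧ b = 0 ∧ ‖c‖ = 1) := by
  simp only [HhatMat_det_eq_zero_iff, exists_and_left, exists_exp_neg_I_mul_eq_iff]
end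
end
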